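/- arXiv:2304.02077 — 4 statements merged into one kernel-verified Lean document; each statement's English description precedes it below -/
import Mathlib

section
/- Let X ~ Bin(n, p) and let Y be distributed as X conditioned on the event {X ≥ 1}. Then Y is stochastically dominated by 1 + X', where X' ~ Bin(n, p), i.e., P(Y ≥ k) ≤ P(1 + X' ≥ k) for all k. -/
/-! Conditioning `X ~ Bin(n, p)` on `{X ≥ 1}` and comparing with the law of `1 + X'` reduces,
after writing `P(X ≥ m) = P(X = m) + P(X ≥ m + 1)` and `P(X ≥ 1) = 1 - P(X = 0)`, to
`P(X = 0) P(X ≥ m) ≤ P(X = m)`. Summing over the tail, this follows from the termwise bound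
`P(X = 0) P(X = m + i) ≤ P(X = m) P(X = i)`, which is `C(n, m + i) ≤ C(n, m) C(n, i)` after
matching the powers of `p` and `1 - p`. -/

open scoped ENNReal NNReal ProbabilityTheory
open MeasureTheory ProbabilityTheory Set

lemma Nat.choose_add_le_choose_mul_choose (n m i : ℕ) :
    n.choose (m + i) ≤ n.choose m * n.choose i := by
  rcases le_or_gt (m + i) n with h | h
  · calc n.choose (m + i) ≤ n.choose (m + i) * (m + i).choose m :=
          Nat.le_mul_of_pos_right _ (Nat.choose_pos (Nat.le_add_right m i))
      _ = n.choose m * (n - m).choose i := by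
          rw [Nat.choose_mul (Nat.le_add_right m i), Nat.add_sub_cancel_left]
      _ ≤ n.choose m * n.choose i := by gcongr; exact Nat.sub_le n m
  · simp [Nat.choose_eq_zero_of_lt h]

lemma pow_mul_pow_mul_choose_le {R : Type*} [CommSemiring R] [PartialOrder R] [IsOrderedRing R]
    {a b : R} (ha : 0 ≤ a) (hb : 0 ≤ b) (n m i : ℕ) :
    b ^ n * (a ^ (m + i) * b ^ (n - (m + i)) * n.choose (m + i)) ≤
      (a ^ m * b ^ (n - m) * n.choose m) * (a ^ i * b ^ (n - i) * n.choose i) := by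
  rcases le_or_gt (m + i) n with h | h
  · have hexp : n + (n - (m + i)) = (n - m) + (n - i) := by omega
    calc b ^ n * (a ^ (m + i) * b ^ (n - (m + i)) * n.choose (m + i))
        = a ^ m * a ^ i * (b ^ (n - m) * b ^ (n - i)) * n.choose (m + i) := by
          rw [← pow_add b, ← hexp, pow_add]; ring
      _ ≤ a ^ m * a ^ i * (b ^ (n - m) * b ^ (n - i)) * (n.choose m * n.choose i : ℕ) := by
          gcongr
          exact Nat.choose_add_le_choose_mul_choose n m i
      _ = _ := by push_cast; ring
  · rw [Nat.choose_eq_zero_of_lt h, Nat.cast_zero, mul_zero, mul_zero]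
    positivity

lemma measure_Ici_eq_tsum (μ : Measure ℕ) (m : ℕ) : μ (Ici m) = ∑' i, μ {m + i} := by
  have hIci : Ici m = ⋃ i, {m + i} := by
    ext j; simpa [eq_comm] using le_iff_exists_add
  rw [hIci, measure_iUnion _ fun _ => measurableSet_singleton _]
  intro i i' h
  simpa using h

lemma measure_Ici_eq_add (μ : Measure ℕ) (m : ℕ) : μ (Ici m) = μ {m} + μ (Ici (m + 1)) := by
  rw [measure_Ici_eq_tsum, measure_Ici_eq_tsum, tsum_eq_zero_add' ENNReal.summable]
  simp only [add_zero, Nat.add_right_comm m 1, Nat.add_assoc]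

section ProbabilityMeasure

variable {μ : Measure ℕ} [IsProbabilityMeasure μ]

lemma tsum_measure_singleton_eq_one : ∑' i, μ {i} = 1 := by
  simpa using (measure_Ici_eq_tsum μ 0).symm

lemma measure_singleton_zero_mul_measure_Ici_le
    (h : ∀ m i, μ {0} * μ {m + i} ≤ μ {m} * μ {i}) (m : ℕ) :
    μ {0} * μ (Ici m) ≤ μ {m} := calc
  μ {0} * μ (Ici m) = ∑' i, μ {0} * μ {m + i} := by
    rw [measure_Ici_eq_tsum, ENNReal.tsum_mul_left]
  _ ≤ ∑' i, μ {m} * μ {i} := ENNReal.tsum_le_tsum (h m)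
  _ = μ {m} := by
    rw [ENNReal.tsum_mul_left, tsum_measure_singleton_eq_one, mul_one]

lemma measure_Ici_succ_le_mul (h : ∀ m, μ {0} * μ (Ici m) ≤ μ {m}) (m : ℕ) :
    μ (Ici (m + 1)) ≤ μ (Ici 1) * μ (Ici m) := by
  refine (ENNReal.add_le_add_iff_right (by finiteness : μ {0} * μ (Ici m) ≠ ∞)).1 ?_
  calc μ (Ici (m + 1)) + μ {0} * μ (Ici m) ≤ μ (Ici (m + 1)) + μ {m} := by gcongr; exact h m
    _ = (μ (Ici 1) + μ {0}) * μ (Ici m) := by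
      rw [add_comm, ← measure_Ici_eq_add, add_comm, ← measure_Ici_eq_add]; simp
    _ = _ := add_mul _ _ _

lemma cond_Ici_one_le_of_mul_le (h : ∀ m, μ {0} * μ (Ici m) ≤ μ {m}) :
    ∀ k, μ[|Ici 1] (Ici k) ≤ μ {j | k ≤ j + 1}
  | 0 => prob_le_one.trans (by simp)
  | m + 1 => by
    have hinter : Ici 1 ∩ Ici (m + 1) = Ici (m + 1) :=
      inter_eq_right.2 (Ici_subset_Ici.2 (by omega))
    rw [cond_apply measurableSet_Ici, hinter]
    calc (μ (Ici 1))⁻¹ * μ (Ici (m + 1)) ≤ (μ (Ici 1))⁻¹ * (μ (Ici 1) * μ (Ici m)) := by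
          gcongr; exact measure_Ici_succ_le_mul h m
      _ ≤ μ (Ici m) := by
          rw [← mul_assoc]; exact mul_le_of_le_one_left' (ENNReal.inv_mul_le_one _)
      _ = μ {j | m + 1 ≤ j + 1} := by simp [Ici]

end ProbabilityMeasure

set_option linter.deprecated false in
lemma PMF.binomial_map_val_toMeasure_singleton (p : ℝ≥0) (h : p ≤ 1) (n j : ℕ) :
    ((PMF.binomial p h n).map Fin.val).toMeasure {j} =
      (p : ℝ≥0∞) ^ j * ((1 - p : ℝ≥0) : ℝ≥0∞) ^ (n - j) * n.choose j := by
  rw [PMF.toMeasure_apply_singleton _ _ (measurableSet_singleton j), PMF.map_apply]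
  rcases le_or_gt j n with hj | hj
  · refine (tsum_eq_single ⟨j, Nat.lt_succ_of_le hj⟩ fun a ha => if_neg ?_).trans ?_
    · exact fun h => ha (Fin.ext h.symm)
    · simp [PMF.binomial_apply]
  · rw [Nat.choose_eq_zero_of_lt hj, Nat.cast_zero, mul_zero]
    exact ENNReal.tsum_eq_zero.2 fun a => if_neg (by omega)

set_option linter.deprecated false in
lemma PMF.binomial_map_val_toMeasure_zero_mul_le (p : ℝ≥0) (h : p ≤ 1) (n m i : ℕ) :
    let μ := ((PMF.binomial p h n).map Fin.val).toMeasure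
    μ {0} * μ {m + i} ≤ μ {m} * μ {i} := by
  simpa [PMF.binomial_map_val_toMeasure_singleton] using
    pow_mul_pow_mul_choose_le (a := (p : ℝ≥0∞)) (b := ((1 - p : ℝ≥0) : ℝ≥0∞)) zero_le zero_le n m i

/-- the law of `X ~ Bin(n, p)` conditioned on `{X ≥ 1}` is stochastically
dominated by the law of `1 + X'` with `X' ~ Bin(n, p)`: for every `k`,
`P(X ≥ k ∣ X ≥ 1) ≤ P(1 + X' ≥ k)`. -/
theorem stmt9 (n : ℕ) (p : ℝ≥0∞) (hp : p ≤ 1)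
    (b : MeasureTheory.Measure ℕ)
    (hb : b = ((PMF.binomial p.toNNReal (by simpa using ENNReal.toNNReal_mono ENNReal.one_ne_top hp) n).map (Fin.val : Fin (n+1) → ℕ)).toMeasure) :
    ∀ k : ℕ, (b[|{j | 1 ≤ j}]) {j | k ≤ j} ≤ b {j | k ≤ j + 1} := by
  subst hb
  exact cond_Ici_one_le_of_mul_le <| measure_singleton_zero_mul_measure_Ici_le <|
    PMF.binomial_map_val_toMeasure_zero_mul_le _ _ n
end

section
/- The total variation distance between the Binomial(n, p) distribution and the Poisson(np) distribution is at most p. -/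
/-!
Stein–Chen method. For `L > 0` and an event `s ⊆ ℕ`, there is `g : ℕ → ℝ` solving the Stein
equation `L g(j+1) - j g(j) = 1_s(j) - Po_L(s)`, and its increments satisfy
`|g(j+2) - g(j+1)| ≤ 1/L`.
Averaging the Stein equation against `X ~ Bin(n+1, p)` with `L = (n+1)p` and using
`E[X f(X)] = L E[f(Y+1)]`, `E[f(X+1)] = E[(1-p) f(Y+1) + p f(Y+2)]` for `Y ~ Bin(n, p)` gives
`Bin(s) - Po_L(s) = L p E[g(Y+2) - g(Y+1)]`, which is at most `L p / L = p` in absolute value.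

The increment bound: `g(j+2) - g(j+1) = (1_s(j+1) - Po_L(s)) / L + c_j X_j`, where `c_j` has the
sign of `j + 1 - L` and the numerator `X_j` of `g(j+1)` lies between `-Po_L(s) E_j` and
`Po_L(s) (e^L - E_j)`, `E_j` being the `j`-th partial sum of the exponential series. Comparing
consecutive terms of that series bounds `c_j X_j` by `Po_L(s) / L` in both regimes; the lower bound
follows by passing to `sᶜ`, which negates `g`.
-/

open Finset Real
open scoped ENNReal NNReal Nat

namespace PoissonApprox

noncomputable def expTerm (L : ℝ) (k : ℕ) : ℝ := L ^ k / k !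

noncomputable def expPartialSum (L : ℝ) (s : Set ℕ) (j : ℕ) : ℝ :=
  ∑ k ∈ range (j + 1), s.indicator (expTerm L) k

section ExpSeries

variable {L : ℝ}

lemma expTerm_nonneg (hL : 0 ≤ L) (k : ℕ) : 0 ≤ expTerm L k := by
  unfold expTerm; positivity

lemma expTerm_pos (hL : 0 < L) (k : ℕ) : 0 < expTerm L k := by
  unfold expTerm; positivity

lemma hasSum_expTerm (L : ℝ) : HasSum (expTerm L) (exp L) := by
  rw [exp_eq_exp_ℝ]
  exact NormedSpace.expSeries_div_hasSum_exp L

lemma succ_mul_expTerm_succ (L : ℝ) (k : ℕ) :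
    (k + 1) * expTerm L (k + 1) = L * expTerm L k := by
  rw [expTerm, expTerm, Nat.factorial_succ]
  push_cast
  field_simp
  ring

lemma indicator_expTerm (L : ℝ) (s : Set ℕ) (k : ℕ) :
    s.indicator (expTerm L) k = s.indicator 1 k * expTerm L k := by
  by_cases hk : k ∈ s <;> simp [hk]

lemma expTerm_zero (L : ℝ) : expTerm L 0 = 1 := by
  simp [expTerm]

lemma expTerm_succ_eq (L : ℝ) (k : ℕ) : expTerm L (k + 1) = L * expTerm L k / (k + 1) := by
  rw [← succ_mul_expTerm_succ]
  field_simp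

lemma expPartialSum_zero (L : ℝ) (s : Set ℕ) : expPartialSum L s 0 = s.indicator 1 0 := by
  simp [expPartialSum, indicator_expTerm, expTerm_zero]

lemma expPartialSum_succ (L : ℝ) (s : Set ℕ) (j : ℕ) :
    expPartialSum L s (j + 1) = expPartialSum L s j + s.indicator (expTerm L) (j + 1) :=
  sum_range_succ _ _

lemma expPartialSum_univ (L : ℝ) (j : ℕ) :
    expPartialSum L Set.univ j = ∑ k ∈ range (j + 1), expTerm L k := by
  simp [expPartialSum]

lemma expPartialSum_compl (L : ℝ) (s : Set ℕ) (j : ℕ) :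
    expPartialSum L sᶜ j = expPartialSum L Set.univ j - expPartialSum L s j := by
  simp only [expPartialSum, Set.indicator_compl, Pi.sub_apply, Set.indicator_univ, sum_sub_distrib]

lemma expPartialSum_nonneg (hL : 0 ≤ L) (s : Set ℕ) (j : ℕ) : 0 ≤ expPartialSum L s j :=
  sum_nonneg fun k _ => Set.indicator_nonneg (fun k _ => expTerm_nonneg hL k) k

lemma sub_mul_expPartialSum_univ_le (hL : 0 ≤ L) (j : ℕ) :
    (L - (j + 1)) * expPartialSum L Set.univ j ≤ L * expTerm L j := by
  have hshift : L * expPartialSum L Set.univ j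
      = ∑ k ∈ range (j + 1), (k + 1) * expTerm L (k + 1) := by
    rw [expPartialSum_univ, mul_sum]
    exact sum_congr rfl fun k _ => (succ_mul_expTerm_succ L k).symm
  have hle : ∑ k ∈ range (j + 1), (k + 1) * expTerm L (k + 1)
      ≤ ∑ k ∈ range (j + 1), (j + 1) * expTerm L (k + 1) := by
    gcongr with k hk
    · exact expTerm_nonneg hL _
    · exact_mod_cast mem_range_succ_iff.mp hk
  have hsplit : ∑ k ∈ range (j + 1), expTerm L (k + 1) + expTerm L 0
      = expPartialSum L Set.univ j + expTerm L (j + 1) := by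
    rw [← sum_range_succ', sum_range_succ, expPartialSum_univ]
  have h0 : 0 ≤ expTerm L 0 := expTerm_nonneg hL 0
  rw [← mul_sum] at hle
  nlinarith [succ_mul_expTerm_succ L j]

lemma hasSum_expTerm_tail (L : ℝ) (j : ℕ) :
    HasSum (fun i => expTerm L (i + (j + 1))) (exp L - expPartialSum L Set.univ j) := by
  rw [expPartialSum_univ]
  exact (hasSum_nat_add_iff' (j + 1)).mpr (hasSum_expTerm L)

lemma sub_mul_exp_sub_expPartialSum_univ_le (hL : 0 ≤ L) (j : ℕ) :
    ((j + 1) - L) * (exp L - expPartialSum L Set.univ j) ≤ L * expTerm L j := by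
  have hcompare : (j + 1) * (exp L - expPartialSum L Set.univ (j + 1))
      ≤ L * (exp L - expPartialSum L Set.univ j) := by
    refine hasSum_le (fun i => ?_) ((hasSum_expTerm_tail L (j + 1)).mul_left _)
      ((hasSum_expTerm_tail L j).mul_left L)
    rw [← succ_mul_expTerm_succ, show i + (j + 1 + 1) = i + (j + 1) + 1 by ring]
    gcongr
    · exact expTerm_nonneg hL _
    · linarith [(i.cast_nonneg : (0 : ℝ) ≤ i)]
  have hstep := expPartialSum_succ L Set.univ j
  rw [Set.indicator_univ] at hstep
  nlinarith [succ_mul_expTerm_succ L j]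

end ExpSeries

noncomputable def poissonProb (L : ℝ) (s : Set ℕ) : ℝ :=
  exp (-L) * ∑' k, s.indicator (expTerm L) k

section Poisson

variable {L : ℝ}

lemma poissonProb_add_compl (L : ℝ) (s : Set ℕ) : poissonProb L s + poissonProb L sᶜ = 1 := by
  have hs := ((hasSum_expTerm L).summable.indicator s).hasSum
  have hsc := ((hasSum_expTerm L).summable.indicator sᶜ).hasSum
  rw [poissonProb, poissonProb, ← mul_add, (hs.add hsc).unique (by simpa using hasSum_expTerm L),
    ← exp_add, neg_add_cancel, exp_zero]

lemma poissonProb_nonneg (hL : 0 ≤ L) (s : Set ℕ) : 0 ≤ poissonProb L s :=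
  mul_nonneg (exp_nonneg _)
    (tsum_nonneg fun k => Set.indicator_nonneg (fun k _ => expTerm_nonneg hL k) k)

lemma exp_neg_mul_expPartialSum_le (hL : 0 ≤ L) (s : Set ℕ) (j : ℕ) :
    exp (-L) * expPartialSum L s j ≤ poissonProb L s := by
  refine mul_le_mul_of_nonneg_left ?_ (exp_nonneg _)
  exact ((hasSum_expTerm L).summable.indicator s).sum_le_tsum _
    fun k _ => Set.indicator_nonneg (fun k _ => expTerm_nonneg hL k) k

lemma poissonProb_zero (s : Set ℕ) : poissonProb 0 s = s.indicator 1 0 := by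
  rw [poissonProb, neg_zero, exp_zero, one_mul, tsum_eq_single 0]
  · by_cases h : 0 ∈ s <;> simp [h, expTerm]
  · intro k hk
    simp [expTerm, hk]

lemma poissonMeasure_toReal (r : ℝ≥0) (s : Set ℕ) :
    (ProbabilityTheory.poissonMeasure r s).toReal = poissonProb r s := by
  rw [← MeasureTheory.measureReal_def, ← MeasureTheory.integral_indicator_one .of_discrete,
    ProbabilityTheory.integral_poissonMeasure, poissonProb, ← tsum_mul_left]
  congr with k
  by_cases hk : k ∈ s <;> simp [hk, expTerm, mul_div_assoc]

end Poisson

/-- `g(j+1) = (Po_L(s ∩ [0, j]) - Po_L(s) Po_L([0, j])) / (L Po_L({j}))`, the solution with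
`g 0 = 0` of the Stein equation `L g(j+1) - j g(j) = 1_s(j) - Po_L(s)`; numerator and denominator
are multiplied by `e^L`. -/
noncomputable def steinSol (L : ℝ) (s : Set ℕ) : ℕ → ℝ
  | 0 => 0
  | j + 1 =>
    (expPartialSum L s j - poissonProb L s * expPartialSum L Set.univ j) / (L * expTerm L j)

section Stein

variable {L : ℝ}

lemma steinSol_compl (L : ℝ) (s : Set ℕ) : steinSol L sᶜ = -steinSol L s := by
  funext j
  cases j with
  | zero => simp [steinSol]
  | succ j =>
    simp only [steinSol, Pi.neg_apply, expPartialSum_compl,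
      eq_sub_of_add_eq' (poissonProb_add_compl L s)]
    ring

lemma steinSol_spec (hL : 0 < L) (s : Set ℕ) (j : ℕ) :
    L * steinSol L s (j + 1) - j * steinSol L s j = s.indicator 1 j - poissonProb L s := by
  cases j with
  | zero =>
    simp only [steinSol, expPartialSum_zero, expTerm_zero, Set.indicator_univ, Pi.one_apply,
      Nat.cast_zero, zero_mul, sub_zero, mul_one]
    field_simp
  | succ j =>
    have hq := expTerm_pos hL j
    simp only [steinSol, expPartialSum_succ, indicator_expTerm, Set.indicator_univ, Pi.one_apply,
      expTerm_succ_eq L j]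
    push_cast
    field_simp
    ring

lemma steinSol_succ_sub (hL : 0 < L) (s : Set ℕ) (j : ℕ) :
    steinSol L s (j + 2) - steinSol L s (j + 1) = (s.indicator 1 (j + 1) - poissonProb L s) / L
      + (j + 1 - L) / (L ^ 2 * expTerm L j)
        * (expPartialSum L s j - poissonProb L s * expPartialSum L Set.univ j) := by
  have hq := expTerm_pos hL j
  simp only [steinSol, expPartialSum_succ, indicator_expTerm, Set.indicator_univ, Pi.one_apply,
    expTerm_succ_eq L j]
  field_simp
  ring

lemma steinSol_succ_sub_le (hL : 0 < L) (s : Set ℕ) (j : ℕ) :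
    steinSol L s (j + 2) - steinSol L s (j + 1) ≤ 1 / L := by
  rw [steinSol_succ_sub hL]
  set P := poissonProb L s
  set E := expPartialSum L Set.univ j
  have hq := expTerm_pos hL j
  have hP := poissonProb_nonneg hL.le s
  have hX_lower : -(P * E) ≤ expPartialSum L s j - P * E := by
    linarith [expPartialSum_nonneg hL.le s j]
  have hX_upper : expPartialSum L s j - P * E ≤ P * (exp L - E) := by
    have := exp_neg_mul_expPartialSum_le hL.le s j
    rw [exp_neg, inv_mul_le_iff₀ (exp_pos L)] at this
    linarith
  have hcoef : (j + 1 - L) * (expPartialSum L s j - P * E) ≤ P * (L * expTerm L j) := by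
    rcases le_total 0 (j + 1 - L) with hj | hj
    · calc (j + 1 - L) * (expPartialSum L s j - P * E) ≤ (j + 1 - L) * (P * (exp L - E)) := by
            gcongr
        _ = P * ((j + 1 - L) * (exp L - E)) := by ring
        _ ≤ P * (L * expTerm L j) :=
            mul_le_mul_of_nonneg_left (sub_mul_exp_sub_expPartialSum_univ_le hL.le j) hP
    · calc (j + 1 - L) * (expPartialSum L s j - P * E) ≤ (j + 1 - L) * -(P * E) :=
            mul_le_mul_of_nonpos_left hX_lower hj
        _ = P * ((L - (j + 1)) * E) := by ring
        _ ≤ P * (L * expTerm L j) :=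
            mul_le_mul_of_nonneg_left (sub_mul_expPartialSum_univ_le hL.le j) hP
  have hind : s.indicator 1 (j + 1) ≤ (1 : ℝ) := by
    by_cases h : j + 1 ∈ s <;> simp [h]
  calc (s.indicator 1 (j + 1) - P) / L
        + (j + 1 - L) / (L ^ 2 * expTerm L j) * (expPartialSum L s j - P * E)
      ≤ (1 - P) / L + P / L := by
        gcongr
        rw [div_mul_eq_mul_div, div_le_div_iff₀ (by positivity) hL]
        linarith [mul_le_mul_of_nonneg_right hcoef hL.le]
    _ = 1 / L := by ring

lemma abs_steinSol_succ_sub_le (hL : 0 < L) (s : Set ℕ) (j : ℕ) :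
    |steinSol L s (j + 2) - steinSol L s (j + 1)| ≤ 1 / L := by
  refine abs_le.mpr ⟨?_, steinSol_succ_sub_le hL s j⟩
  have := steinSol_succ_sub_le hL sᶜ j
  rw [steinSol_compl] at this
  simp only [Pi.neg_apply] at this
  linarith

end Stein

noncomputable def binomialWeight (p : ℝ) (n k : ℕ) : ℝ :=
  n.choose k * p ^ k * (1 - p) ^ (n - k)

section Binomial

lemma binomialWeight_nonneg {p : ℝ} (hp0 : 0 ≤ p) (hp1 : p ≤ 1) (n k : ℕ) :
    0 ≤ binomialWeight p n k := by
  have : 0 ≤ 1 - p := sub_nonneg.mpr hp1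
  unfold binomialWeight; positivity

lemma sum_binomialWeight (p : ℝ) (n : ℕ) :
    ∑ k ∈ range (n + 1), binomialWeight p n k = 1 := by
  have h := (add_pow p (1 - p) n).symm
  rw [add_sub_cancel, one_pow] at h
  rw [← h]
  exact sum_congr rfl fun k _ => by rw [binomialWeight]; ring

lemma binomialWeight_of_lt (p : ℝ) {n k : ℕ} (h : n < k) : binomialWeight p n k = 0 := by
  simp [binomialWeight, Nat.choose_eq_zero_of_lt h]

lemma binomialWeight_succ_zero (p : ℝ) (n : ℕ) :
    binomialWeight p (n + 1) 0 = (1 - p) * binomialWeight p n 0 := by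
  simp [binomialWeight, pow_succ, mul_comm]

lemma binomialWeight_succ_succ (p : ℝ) (n k : ℕ) :
    binomialWeight p (n + 1) (k + 1)
      = (1 - p) * binomialWeight p n (k + 1) + p * binomialWeight p n k := by
  rcases lt_trichotomy k n with hk | rfl | hk
  · obtain ⟨d, rfl⟩ := Nat.exists_eq_add_of_lt hk
    simp only [binomialWeight, Nat.choose_succ_succ', show k + d + 1 + 1 - (k + 1) = d + 1 by omega,
      show k + d + 1 - (k + 1) = d by omega, show k + d + 1 - k = d + 1 by omega]
    push_cast
    ring
  · simp [binomialWeight, pow_succ, mul_comm]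
  · simp [binomialWeight_of_lt p hk, binomialWeight_of_lt p (Nat.succ_lt_succ hk),
      binomialWeight_of_lt p (hk.trans (Nat.lt_succ_self k))]

lemma succ_mul_binomialWeight_succ (p : ℝ) (n k : ℕ) :
    (k + 1) * binomialWeight p (n + 1) (k + 1) = (n + 1) * p * binomialWeight p n k := by
  have hchoose : ((n + 1 : ℕ) : ℝ) * n.choose k = (n + 1).choose (k + 1) * ((k + 1 : ℕ) : ℝ) :=
    mod_cast Nat.add_one_mul_choose_eq n k
  simp only [binomialWeight, Nat.add_sub_add_right, pow_succ]
  push_cast at hchoose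
  linear_combination (-(p ^ k * p * (1 - p) ^ (n - k))) * hchoose

lemma sum_binomialWeight_succ (p : ℝ) (n : ℕ) (f : ℕ → ℝ) :
    ∑ k ∈ range (n + 2), binomialWeight p (n + 1) k * f k
      = ∑ k ∈ range (n + 1), binomialWeight p n k * ((1 - p) * f k + p * f (k + 1)) := by
  have hshift : ∑ k ∈ range (n + 1), binomialWeight p n k * f k
      = ∑ k ∈ range (n + 1), binomialWeight p n (k + 1) * f (k + 1)
          + binomialWeight p n 0 * f 0 := by
    rw [← sum_range_succ' (fun k => binomialWeight p n k * f k), sum_range_succ (n := n + 1),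
      binomialWeight_of_lt p (Nat.lt_succ_self n), zero_mul, add_zero]
  have hpascal : ∑ k ∈ range (n + 1), binomialWeight p (n + 1) (k + 1) * f (k + 1)
      = ∑ k ∈ range (n + 1), ((1 - p) * (binomialWeight p n (k + 1) * f (k + 1))
          + p * (binomialWeight p n k * f (k + 1))) :=
    sum_congr rfl fun k _ => by rw [binomialWeight_succ_succ]; ring
  have hsplit : ∑ k ∈ range (n + 1), binomialWeight p n k * ((1 - p) * f k + p * f (k + 1))
      = ∑ k ∈ range (n + 1), ((1 - p) * (binomialWeight p n k * f k)
          + p * (binomialWeight p n k * f (k + 1))) :=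
    sum_congr rfl fun k _ => by ring
  rw [sum_range_succ', binomialWeight_succ_zero, hpascal, hsplit, sum_add_distrib, sum_add_distrib,
    ← mul_sum, ← mul_sum, ← mul_sum, hshift]
  ring

lemma sum_binomialWeight_succ_mul (p : ℝ) (n : ℕ) (f : ℕ → ℝ) :
    ∑ k ∈ range (n + 2), binomialWeight p (n + 1) k * (k * f k)
      = (n + 1) * p * ∑ k ∈ range (n + 1), binomialWeight p n k * f (k + 1) := by
  rw [sum_range_succ', mul_sum]
  simp only [Nat.cast_zero, zero_mul, mul_zero, add_zero]
  refine sum_congr rfl fun k _ => ?_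
  push_cast
  linear_combination f (k + 1) * succ_mul_binomialWeight_succ p n k

lemma sum_binomialWeight_stein (p : ℝ) (n : ℕ) (g : ℕ → ℝ) :
    ∑ k ∈ range (n + 2), binomialWeight p (n + 1) k * ((n + 1) * p * g (k + 1) - k * g k)
      = (n + 1) * p * p
          * ∑ k ∈ range (n + 1), binomialWeight p n k * (g (k + 2) - g (k + 1)) := by
  simp only [mul_sub (binomialWeight p (n + 1) _), sum_sub_distrib]
  rw [sum_binomialWeight_succ_mul, sum_binomialWeight_succ p n (fun k => (n + 1) * p * g (k + 1)),
    mul_sum, mul_sum, ← sum_sub_distrib]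
  exact sum_congr rfl fun k _ => by ring

lemma binomialWeight_of_mul_eq_zero {p : ℝ} {n : ℕ} (h : n * p = 0) (k : ℕ) :
    binomialWeight p n k = if k = 0 then 1 else 0 := by
  rcases mul_eq_zero.mp h with hn | rfl
  · obtain rfl : n = 0 := by exact_mod_cast hn
    rcases k with _ | k <;> simp [binomialWeight]
  · rcases k with _ | k <;> simp [binomialWeight]

set_option linter.deprecated false in
lemma pmfBinomial_toMeasure_toReal (p : ℝ≥0) (h : p ≤ 1) (n : ℕ) (s : Set ℕ) :
    (((PMF.binomial p h n).map (Fin.val : Fin (n + 1) → ℕ)).toMeasure s).toReal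
      = ∑ k ∈ range (n + 1), binomialWeight p n k * s.indicator 1 k := by
  rw [PMF.toMeasure_map_apply _ _ _ (measurable_of_countable _) .of_discrete,
    PMF.toMeasure_apply_fintype, ENNReal.toReal_sum fun a _ => ?_, ← Fin.sum_univ_eq_sum_range]
  · refine sum_congr rfl fun a _ => ?_
    by_cases ha : (a : ℕ) ∈ s
    · simp [ha, PMF.binomial_apply, binomialWeight,
        ENNReal.toReal_sub_of_le (ENNReal.coe_le_one_iff.mpr h) ENNReal.one_ne_top]
      ring
    · simp [ha]
  · exact ne_top_of_le_ne_top (PMF.apply_ne_top _ a) (Set.indicator_le_self _ _ a)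

end Binomial

theorem abs_sum_binomialWeight_sub_poissonProb_le {p : ℝ} (hp0 : 0 < p) (hp1 : p ≤ 1) (n : ℕ)
    (s : Set ℕ) :
    |∑ k ∈ range (n + 2), binomialWeight p (n + 1) k * s.indicator 1 k
        - poissonProb ((n + 1) * p) s| ≤ p := by
  set L := ((n : ℝ) + 1) * p
  have hL : 0 < L := by positivity
  have hb := binomialWeight_nonneg hp0.le hp1 n
  have hstein :
      ∑ k ∈ range (n + 2), binomialWeight p (n + 1) k * s.indicator 1 k - poissonProb L s
      = ∑ k ∈ range (n + 2),
          binomialWeight p (n + 1) k * (L * steinSol L s (k + 1) - k * steinSol L s k) := by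
    simp only [steinSol_spec hL, mul_sub, sum_sub_distrib, ← sum_mul, sum_binomialWeight, one_mul]
  calc _ = L * p * |∑ k ∈ range (n + 1),
          binomialWeight p n k * (steinSol L s (k + 2) - steinSol L s (k + 1))| := by
        rw [hstein, sum_binomialWeight_stein, abs_mul, abs_of_pos (by positivity : 0 < L * p)]
    _ ≤ L * p * ∑ k ∈ range (n + 1), binomialWeight p n k * (1 / L) := by
        gcongr
        refine (abs_sum_le_sum_abs _ _).trans (sum_le_sum fun k _ => ?_)
        rw [abs_mul, abs_of_nonneg (hb k)]
        exact mul_le_mul_of_nonneg_left (abs_steinSol_succ_sub_le hL s k) (hb k)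
    _ = p := by
        rw [← sum_mul, sum_binomialWeight]
        field_simp

end PoissonApprox

open PoissonApprox

/-- `d_TV(Bin(n,p), Poi(np)) ≤ p`: for every event `s ⊆ ℕ`, the probabilities
assigned by the binomial and the Poisson distribution differ by at most `p`. -/
theorem stmt10 (n : ℕ) (p : ℝ≥0) (hp' : (p : ℝ≥0∞) ≤ 1)
    (binMeasure : MeasureTheory.Measure ℕ)
    (hbin : binMeasure =
      ((PMF.binomial p (ENNReal.coe_le_one_iff.mp hp') n).map (Fin.val : Fin (n+1) → ℕ)).toMeasure) :
    ∀ s : Set ℕ,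
      |(binMeasure s).toReal - ((ProbabilityTheory.poissonMeasure (n * p)) s).toReal|
        ≤ (p : ℝ) := by
  intro s
  rw [hbin, pmfBinomial_toMeasure_toReal, poissonMeasure_toReal, NNReal.coe_mul, NNReal.coe_natCast]
  rcases eq_or_ne ((n : ℝ) * p) 0 with hnp | hnp
  · simp [binomialWeight_of_mul_eq_zero hnp, hnp, poissonProb_zero]
  · obtain ⟨m, rfl⟩ : ∃ m, n = m + 1 :=
      Nat.exists_eq_succ_of_ne_zero (by rintro rfl; simp at hnp)
    have hp0 : 0 < (p : ℝ) := lt_of_le_of_ne p.coe_nonneg (right_ne_zero_of_mul hnp).symm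
    have hp1 : (p : ℝ) ≤ 1 := by exact_mod_cast ENNReal.coe_le_one_iff.mp hp'
    simpa using abs_sum_binomialWeight_sub_poissonProb_le hp0 hp1 m s
end

section
/- For any λ, λ' ≥ 0, the total variation distance between the Poisson(λ) and Poisson(λ') distributions is at most |λ − λ'|. -/
open scoped ENNReal NNReal

open Real MeasureTheory ProbabilityTheory

/-!
For `l ≤ l'` the Poisson weights satisfy `p_n(l') ≥ e^{-(l' - l)} p_n(l)`, since `l'^n ≥ l^n`.
So `Po(l')` dominates `e^{-(l' - l)} • Po(l)`, and any probability measure dominating `c • μ` is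
within `1 - c` of `μ` on every event; finally `1 - e^{-x} ≤ x`.
-/

section Domination

variable {α : Type*} [MeasurableSpace α] {μ ν : Measure α} {c : ℝ≥0∞}

lemma measureReal_sub_measureReal_le_of_smul_le [IsProbabilityMeasure μ]
    [IsProbabilityMeasure ν] (h : c • μ ≤ ν) (s : Set α) :
    μ.real s - ν.real s ≤ 1 - c.toReal := by
  have hc : c ≤ 1 := by simpa using h Set.univ
  have hc_real : c.toReal ≤ 1 := ENNReal.toReal_le_of_le_ofReal zero_le_one (by simpa using hc)
  have hν : c.toReal * μ.real s ≤ ν.real s := by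
    rw [measureReal_def, measureReal_def, ← ENNReal.toReal_mul]
    exact ENNReal.toReal_mono (measure_ne_top ν s) (by simpa using h s)
  nlinarith [measureReal_le_one (μ := μ) (s := s), measureReal_nonneg (μ := μ) (s := s)]

lemma abs_measureReal_sub_measureReal_le_of_smul_le [IsProbabilityMeasure μ]
    [IsProbabilityMeasure ν] (h : c • μ ≤ ν) {s : Set α} (hs : MeasurableSet s) :
    |μ.real s - ν.real s| ≤ 1 - c.toReal := by
  have hcompl : ν.real s - μ.real s = μ.real sᶜ - ν.real sᶜ := by
    linarith [measureReal_add_measureReal_compl (μ := μ) hs,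
      measureReal_add_measureReal_compl (μ := ν) hs, probReal_univ (μ := μ),
      probReal_univ (μ := ν)]
  rw [abs_le]
  constructor
  · linarith [measureReal_sub_measureReal_le_of_smul_le h sᶜ]
  · exact measureReal_sub_measureReal_le_of_smul_le h s

end Domination

lemma smul_poissonMeasure_le {r r' : ℝ≥0} (h : r ≤ r') :
    ENNReal.ofReal (exp (-((r' : ℝ) - r))) • poissonMeasure r ≤ poissonMeasure r' := by
  intro s
  rw [← Measure.tsum_indicator_apply_singleton _ s .of_discrete,
    ← Measure.tsum_indicator_apply_singleton _ s .of_discrete]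
  refine ENNReal.tsum_le_tsum fun n => Set.indicator_le_indicator ?_
  rw [Measure.smul_apply, smul_eq_mul, poissonMeasure_singleton, poissonMeasure_singleton,
    ← ENNReal.ofReal_mul (exp_pos _).le]
  refine ENNReal.ofReal_le_ofReal ?_
  calc exp (-((r' : ℝ) - r)) * (exp (-r) * r ^ n / n.factorial)
      = exp (-r') * r ^ n / n.factorial := by
        rw [← mul_div_assoc, ← mul_assoc, ← exp_add]
        ring_nf
    _ ≤ exp (-r') * r' ^ n / n.factorial := by gcongr

/-- `d_TV(Poi(λ), Poi(λ')) ≤ |λ - λ'|`: for every event `s ⊆ ℕ`, the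
probabilities assigned by the two Poisson distributions differ by at most `|λ - λ'|`. -/
theorem stmt11 (l l' : ℝ≥0) :
    ∀ s : Set ℕ,
      |((ProbabilityTheory.poissonMeasure l) s).toReal
        - ((ProbabilityTheory.poissonMeasure l') s).toReal| ≤ |(l : ℝ) - (l' : ℝ)| := by
  intro s
  wlog h : l ≤ l' generalizing l l'
  · rw [abs_sub_comm, abs_sub_comm (l : ℝ)]
    exact this l' l (le_of_not_ge h)
  calc |(poissonMeasure l).real s - (poissonMeasure l').real s|
      ≤ 1 - exp (-((l' : ℝ) - l)) := by
        simpa [ENNReal.toReal_ofReal (exp_pos _).le] using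
          abs_measureReal_sub_measureReal_le_of_smul_le (smul_poissonMeasure_le h) .of_discrete
    _ ≤ (l' : ℝ) - l := by linarith [add_one_le_exp (-((l' : ℝ) - l))]
    _ ≤ |(l : ℝ) - l'| := by rw [abs_sub_comm]; exact le_abs_self _
end

section
/- The bipartite non-backtracking operator B satisfies the parity-time symmetry J_Δ B = B* J_Δ, where J_Δ = ΔJ = JΔ. -/
open Matrix

variable {V₁ V₂ : Type*}

/-- The set of oriented 2-paths `(e₁, e₂, e₃)` of a bipartite graph with edge relation `E`:
`{e₁, e₂}` and `{e₂, e₃}` are edges and `e₁ ≠ e₃`. -/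
def Path2 (E : V₁ → V₂ → Prop) : Type _ :=
  {e : V₁ × V₂ × V₁ // E e.1 e.2.1 ∧ E e.2.2 e.2.1 ∧ e.1 ≠ e.2.2}

variable [Fintype V₁] [Fintype V₂] [DecidableEq V₁] [DecidableEq V₂]
variable (E : V₁ → V₂ → Prop) [∀ x y, Decidable (E x y)]

instance : Fintype (Path2 E) := by unfold Path2; infer_instance
instance : DecidableEq (Path2 E) := by unfold Path2; infer_instance

/-- The start operator `S`, `S_{x,e} = 1{e₁ = x}`. -/
def startOp : Matrix V₁ (Path2 E) ℝ := fun x e => if e.val.1 = x then 1 else 0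

/-- The terminal operator `T`, `T_{e,x} = 1{e₃ = x}`. -/
def termOp : Matrix (Path2 E) V₁ ℝ := fun e x => if e.val.2.2 = x then 1 else 0

/-- The diagonal weight operator `Δ`, `Δ_{e,e} = A_{e₁e₂} A_{e₃e₂}`. -/
def weightOp (A : Matrix V₁ V₂ ℝ) : Matrix (Path2 E) (Path2 E) ℝ :=
  fun e f => if e = f then A e.val.1 e.val.2.1 * A e.val.2.2 e.val.2.1 else 0

/-- The edge-inversion operator `J`, `J_{e,f} = 1{f = (e₃, e₂, e₁)}`. -/
def invOp : Matrix (Path2 E) (Path2 E) ℝ :=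
  fun e f => if f.val = (e.val.2.2, e.val.2.1, e.val.1) then 1 else 0

/-- The bipartite non-backtracking operator `B`,
`B_{ef} = 1{e₃ = f₁, e₂ ≠ f₂} A_{f₁f₂} A_{f₃f₂}`. -/
def nbOp (A : Matrix V₁ V₂ ℝ) : Matrix (Path2 E) (Path2 E) ℝ :=
  fun e f => if e.val.2.2 = f.val.1 ∧ e.val.2.1 ≠ f.val.2.1
    then A f.val.1 f.val.2.1 * A f.val.2.2 f.val.2.1 else 0

/-! Both sides have `(e, f)` entry `w(e) w(f) 1{e₁ = f₁, e₂ ≠ f₂}`, with `w` the weight of a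
2-path: `Δ` is diagonal, `J` reverses paths, and `w` is invariant under reversal. -/

namespace Path2

variable {E : V₁ → V₂ → Prop}

omit [Fintype V₁] [Fintype V₂] [DecidableEq V₁] [DecidableEq V₂]

def inv (e : Path2 E) : Path2 E :=
  ⟨(e.val.2.2, e.val.2.1, e.val.1), e.prop.2.1, e.prop.1, e.prop.2.2.symm⟩

@[simp]
lemma inv_inv (e : Path2 E) : e.inv.inv = e := rfl

lemma inv_eq_iff_eq_inv {e f : Path2 E} : e.inv = f ↔ e = f.inv :=
  ⟨fun h => h ▸ e.inv_inv.symm, fun h => h ▸ f.inv_inv⟩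

def weight (A : Matrix V₁ V₂ ℝ) (e : Path2 E) : ℝ :=
  A e.val.1 e.val.2.1 * A e.val.2.2 e.val.2.1

lemma weight_inv (A : Matrix V₁ V₂ ℝ) (e : Path2 E) : e.inv.weight A = e.weight A :=
  mul_comm _ _

end Path2

section

variable {E}

section

omit [Fintype V₁] [Fintype V₂] [∀ x y, Decidable (E x y)]

lemma weightOp_eq_diagonal (A : Matrix V₁ V₂ ℝ) :
    weightOp E A = diagonal (Path2.weight A) := by
  ext e f
  by_cases h : e = f
  · subst h
    simp [weightOp, Path2.weight]
  · simp [weightOp, h]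

lemma invOp_apply (e f : Path2 E) : invOp E e f = if e.inv = f then 1 else 0 :=
  if_congr ((Subtype.ext_iff (a1 := e.inv) (a2 := f)).trans eq_comm).symm rfl rfl

lemma nbOp_inv_apply (A : Matrix V₁ V₂ ℝ) (e f : Path2 E) :
    nbOp E A e.inv f = if e.val.1 = f.val.1 ∧ e.val.2.1 ≠ f.val.2.1 then f.weight A else 0 :=
  rfl

lemma weight_mul_nbOp_inv (A : Matrix V₁ V₂ ℝ) (e f : Path2 E) :
    e.weight A * nbOp E A e.inv f = nbOp E A f.inv e * f.weight A := by
  rw [nbOp_inv_apply, nbOp_inv_apply]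
  by_cases h : e.val.1 = f.val.1 ∧ e.val.2.1 ≠ f.val.2.1
  · rw [if_pos h, if_pos ⟨h.1.symm, h.2.symm⟩, mul_comm]
  · rw [if_neg h, if_neg fun h' => h ⟨h'.1.symm, h'.2.symm⟩, mul_zero, zero_mul]

end

lemma mul_invOp_apply (M : Matrix (Path2 E) (Path2 E) ℝ) (e f : Path2 E) :
    (M * invOp E) e f = M e f.inv := by
  simp [mul_apply, invOp_apply, Path2.inv_eq_iff_eq_inv]

lemma invOp_mul_apply (M : Matrix (Path2 E) (Path2 E) ℝ) (e f : Path2 E) :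
    (invOp E * M) e f = M e.inv f := by
  simp [mul_apply, invOp_apply]

end

theorem stmt16 (A : Matrix V₁ V₂ ℝ) :
    (weightOp E A * invOp E) * nbOp E A = (nbOp E A)ᵀ * (weightOp E A * invOp E) := by
  ext e f
  rw [weightOp_eq_diagonal, Matrix.mul_assoc, diagonal_mul, invOp_mul_apply,
    ← Matrix.mul_assoc, mul_invOp_apply, mul_diagonal, transpose_apply, Path2.weight_inv]
  exact weight_mul_nbOp_inv A e f
end
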